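/- arXiv:1903.06245 — 3 statements merged into one kernel-verified Lean document; each statement's English description precedes it below -/
import Mathlib

section
/- Let G be a non-abelian finite p-group. Then [x,G] = G' if and only if x ∉ D. Furthermore, for every maximal subgroup T of G' that is normal in G, one has Φ(G) ≤ D(T) and log_p |G : D(T)| is even. -/
/-!
STATEMENT 9: Let G be a non-abelian finite p-group.  Then [x,G] = G' if and
only if x ∉ D.  Furthermore, for every maximal subgroup T of G' that is normal
in G, one has Φ(G) ≤ D(T) and log_p |G : D(T)| is even.

Here, for T normal in G, D(T) is the preimage in G of the centre of G/T (the
largest subgroup of G with [D(T),G] ≤ T); `IsMaxIn G' T` says that T is a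
maximal (proper) subgroup of G' = `commutator G`; D is the union of the D(T)
over all maximal subgroups T of G' that are normal in G; [x,G] is the subgroup
generated by {[x,g] : g ∈ G}; Φ(G) = `frattini G`; and "log_p |G : D(T)| is
even" is expressed as |G : D(T)| = p^(2m) for some m (the index is
automatically a power of p).
-/

/-- For `T` normal in `G`, the subgroup `D(T)` with `D(T)/T = Z(G/T)`. -/
def Dsub {G : Type*} [Group G] (T : Subgroup G) [T.Normal] : Subgroup G :=
  (Subgroup.center (G ⧸ T)).comap (QuotientGroup.mk' T)

/-- `T` is a maximal proper subgroup of the subgroup `K`. -/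
def IsMaxIn {G : Type*} [Group G] (K T : Subgroup G) : Prop :=
  T < K ∧ ∀ S : Subgroup G, T < S → S ≤ K → S = K

open scoped commutatorElement

/-!
An element `x` lies in `D(T)` exactly when `[x,G] ≤ T`. The subgroup `[x,G]` is normal and lies
in `G'`; in a `p`-group, a normal subgroup `T` maximal among the normal subgroups strictly below
`G'` is maximal in `G'` outright, because `G'/T` is then central of order `p`. So `[x,G] < G'`
iff `x` lies in some `D(T)`.

For the second part pass to `Q = G/T`, whose derived subgroup is central of order `p`. Then
`g ↦ [a,g]` is a homomorphism `Q → Q'` whose kernel, the centralizer of `a`, has index `1` or `p`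
and therefore contains `Φ(Q)`; hence `Φ(Q) ≤ Z(Q)`. For the index, if `[x,y] ≠ 1` the subgroup
`H = C(x) ∩ C(y)` has index `p²` and contains `Z(Q)`, and `Q = H⟨x,y⟩` gives `Z(H) = Z(Q)`, so
`|Q : Z(Q)| = p² |H : Z(H)|`. As `H` again has central derived subgroup of order dividing `p`,
induction on `|Q|` finishes.
-/

open Subgroup

section Group

variable {G : Type*} [Group G]

theorem isCoatom_of_index_eq_prime {H : Subgroup G} {p : ℕ} (hp : p.Prime) (h : H.index = p) :
    IsCoatom H := by
  refine ⟨fun htop => hp.ne_one (by rw [← h, htop, index_top]), fun K hHK => ?_⟩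
  rcases (Nat.dvd_prime hp).1 (h ▸ index_dvd_of_le hHK.le) with hK | hK
  · exact index_eq_one.1 hK
  · have hmul := relIndex_mul_index hHK.le
    rw [hK, h, Nat.mul_eq_right hp.ne_zero, relIndex_eq_one] at hmul
    exact absurd hmul hHK.not_ge

theorem frattini_le_of_index_dvd_prime {K : Subgroup G} {p : ℕ} (hp : p.Prime)
    (hK : K.index ∣ p) : frattini G ≤ K := by
  rcases (Nat.dvd_prime hp).1 hK with hK | hK
  · rw [index_eq_one.1 hK]
    exact le_top
  · exact frattini_le_coatom (isCoatom_of_index_eq_prime hp hK)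

theorem normal_of_le_center {S : Subgroup G} (h : S ≤ center G) : S.Normal :=
  commutator_top_right_le_iff.1 <| by
    rw [commutator_top_right_eq_bot_iff_le_center.2 h]
    exact bot_le

theorem map_commutator_eq_of_surjective {H : Type*} [Group H] {f : G →* H}
    (hf : Function.Surjective f) : (commutator G).map f = commutator H := by
  rw [_root_.commutator_def, _root_.commutator_def, map_commutator, map_top_of_surjective f hf]

theorem zpowers_eq_of_card_eq_prime {K : Subgroup G} [Finite K] {p : ℕ} (hp : p.Prime)
    (hK : Nat.card K = p) {c : G} (hc : c ∈ K) (hc1 : c ≠ 1) : zpowers c = K := by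
  have hord : orderOf c = p := ((Nat.dvd_prime hp).1 (hK ▸ K.orderOf_dvd_natCard hc)).resolve_left
    (by rwa [orderOf_eq_one_iff])
  exact eq_of_le_of_card_ge (zpowers_le.2 hc) (by rw [hK, Nat.card_zpowers, hord])

theorem center_eq_subgroupOf_of_sup_closure_eq_top {H : Subgroup G} {S : Set G}
    (hHS : H ≤ centralizer S) (htop : H ⊔ closure S = ⊤) :
    center H = (center G).subgroupOf H := by
  ext h
  rw [mem_subgroupOf]
  refine ⟨fun hh => ?_, fun hh => mem_center_iff.2 fun k => Subtype.ext (mem_center_iff.1 hh k)⟩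
  have hcent : H ⊔ closure S ≤ centralizer {(h : G)} := by
    refine sup_le (fun w hw => ?_) ((closure_le _).2 fun s hs => ?_)
    · simpa [mem_centralizer_iff] using (congrArg Subtype.val (mem_center_iff.1 hh ⟨w, hw⟩)).symm
    · simpa [mem_centralizer_iff] using (mem_centralizer_iff.1 (hHS h.2) s hs).symm
  rw [htop] at hcent
  exact mem_center_iff.2 fun g => by simpa [mem_centralizer_iff, eq_comm] using hcent (mem_top g)

theorem map_subtype_commutator_le (H : Subgroup G) :
    (commutator H).map H.subtype ≤ commutator G :=
  H.map_subtype_commutator ▸ commutator_mono le_top le_top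

theorem commutator_le_center_of_subgroup (H : Subgroup G) (hG : commutator G ≤ center G) :
    commutator H ≤ center H := fun w hw =>
  have hw' : (w : G) ∈ center G := hG (map_subtype_commutator_le H ⟨w, hw, rfl⟩)
  mem_center_iff.2 fun k => Subtype.ext (mem_center_iff.1 hw' k)

theorem card_commutator_subgroup_dvd (H : Subgroup G) :
    Nat.card (commutator H) ∣ Nat.card (commutator G) := by
  rw [← card_map_of_injective H.subtype_injective]
  exact card_dvd_of_le (map_subtype_commutator_le H)

theorem isMaxIn_iff_isAtom_map {K T : Subgroup G} [T.Normal] (hTK : T ≤ K) :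
    IsMaxIn K T ↔ IsAtom (K.map (QuotientGroup.mk' T)) := by
  have hsurj := QuotientGroup.mk'_surjective T
  have hbot : ∀ S : Subgroup G, S.map (QuotientGroup.mk' T) = ⊥ ↔ S ≤ T := fun S => by
    rw [Subgroup.map_eq_bot_iff, QuotientGroup.ker_mk']
  constructor
  · rintro ⟨hlt, hmax⟩
    refine ⟨fun h => hlt.not_ge ((hbot K).1 h), fun S hS => ?_⟩
    have hTS := QuotientGroup.le_comap_mk' T S
    have hSK : S.comap (QuotientGroup.mk' T) ≤ K := by
      simpa [sup_of_le_right hTK] using comap_mono (f := QuotientGroup.mk' T) hS.le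
    rw [← map_comap_eq_self_of_surjective hsurj S] at hS ⊢
    rcases hTS.lt_or_eq with hlt' | heq
    · exact absurd (hmax _ hlt' hSK ▸ hS) (lt_irrefl _)
    · exact (hbot _).2 heq.ge
  · rintro ⟨hne, hatom⟩
    refine ⟨hTK.lt_of_ne fun h => hne ((hbot K).2 h.ge), fun S hTS hSK => ?_⟩
    have hmap : S.map (QuotientGroup.mk' T) = K.map (QuotientGroup.mk' T) :=
      (map_mono hSK).eq_of_not_lt fun hlt => hTS.not_ge ((hbot S).1 (hatom _ hlt))
    simpa [sup_of_le_right hTS.le, sup_of_le_right hTK] using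
      congrArg (comap (QuotientGroup.mk' T)) hmap

end Group

namespace IsPGroup

variable {p : ℕ} [hp : Fact p.Prime] {G : Type*} [Group G] [Finite G]

theorem inf_center_ne_bot (hG : IsPGroup p G) {N : Subgroup G} [N.Normal] (hN : N ≠ ⊥) :
    N ⊓ center G ≠ ⊥ := by
  have hpN : p ∣ Nat.card N :=
    (hG.to_subgroup N).card_eq_or_dvd.resolve_left (by rwa [card_eq_one])
  have h1 : (1 : N) ∈ MulAction.fixedPoints (ConjAct G) N := fun g => by
    ext
    simp
  obtain ⟨b, hb, hb1⟩ := (hG.of_equiv ConjAct.toConjAct)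
    |>.exists_fixed_point_of_prime_dvd_card_of_fixed_point N hpN h1
  rw [ne_eq, eq_bot_iff_forall]
  push Not
  refine ⟨b, ⟨b.2, ?_⟩, fun h => hb1 (Subtype.ext h.symm)⟩
  have hbG : (b : G) ∈ MulAction.fixedPoints (ConjAct G) G := fun g => by
    simpa [ConjAct.Subgroup.val_conj_smul] using congrArg Subtype.val (hb g)
  rwa [ConjAct.fixedPoints_eq_center] at hbG

theorem le_center_of_minimal_normal (hG : IsPGroup p G) {C : Subgroup G} [C.Normal]
    (hC : C ≠ ⊥) (hmin : ∀ S : Subgroup G, S.Normal → S ≤ C → S = ⊥ ∨ S = C) :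
    C ≤ center G :=
  inf_eq_left.1 <| (hmin _ inferInstance inf_le_left).resolve_left (hG.inf_center_ne_bot hC)

theorem isAtom_of_minimal_normal (hG : IsPGroup p G) {C : Subgroup G} [C.Normal] (hC : C ≠ ⊥)
    (hmin : ∀ S : Subgroup G, S.Normal → S ≤ C → S = ⊥ ∨ S = C) : IsAtom C :=
  have hcenter := hG.le_center_of_minimal_normal hC hmin
  ⟨hC, fun S hS =>
    (hmin S (normal_of_le_center (hS.le.trans hcenter)) hS.le).resolve_right hS.ne⟩

theorem card_eq_of_isAtom (hG : IsPGroup p G) {C : Subgroup G} (hC : IsAtom C) :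
    Nat.card C = p := by
  have : Nontrivial C := (nontrivial_iff_ne_bot C).2 hC.1
  obtain ⟨c, hc⟩ := exists_prime_orderOf_dvd_card' p
    ((hG.to_subgroup C).card_eq_or_dvd.resolve_left Finite.one_lt_card.ne')
  have hzpowers : zpowers (c : G) = C := (hC.le_iff.1 (zpowers_le.2 c.2)).resolve_left fun h => by
    rw [zpowers_eq_bot, ← orderOf_eq_one_iff, orderOf_coe, hc] at h
    exact hp.out.ne_one h
  rw [← hzpowers, Nat.card_zpowers, orderOf_coe, hc]

theorem exists_isMaxIn_of_lt (hG : IsPGroup p G) {K N : Subgroup G} [hK : K.Normal]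
    (hN : N.Normal) (hNK : N < K) : ∃ T : Subgroup G, ∃ _ : T.Normal, IsMaxIn K T ∧ N ≤ T := by
  obtain ⟨T, ⟨hT, hNT, hTK⟩, hmax⟩ := (Set.toFinite {W : Subgroup G | W.Normal ∧ N ≤ W ∧ W < K}
    ).exists_maximalFor id _ ⟨N, hN, le_rfl, hNK⟩
  have hsurj := QuotientGroup.mk'_surjective T
  refine ⟨T, hT, (isMaxIn_iff_isAtom_map hTK.le).2 ?_, hNT⟩
  have : (K.map (QuotientGroup.mk' T)).Normal := hK.map _ hsurj
  refine (hG.to_quotient T).isAtom_of_minimal_normal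
    (by rw [ne_eq, Subgroup.map_eq_bot_iff, QuotientGroup.ker_mk']; exact hTK.not_ge) ?_
  intro S hS hSK
  have hTS := QuotientGroup.le_comap_mk' T S
  have hSK' : S.comap (QuotientGroup.mk' T) ≤ K := by
    simpa [sup_of_le_right hTK.le] using comap_mono (f := QuotientGroup.mk' T) hSK
  rw [← map_comap_eq_self_of_surjective hsurj S]
  rcases hSK'.lt_or_eq with hlt | heq
  · left
    rw [Subgroup.map_eq_bot_iff, QuotientGroup.ker_mk']
    exact hmax ⟨hS.comap _, hNT.trans hTS, hlt⟩ hTS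
  · exact Or.inr (heq ▸ rfl)

end IsPGroup

section CentralCommutator

variable {Q : Type*} [Group Q]

def commutatorHom (hQ : commutator Q ≤ center Q) (a : Q) : Q →* Q where
  toFun g := ⁅a, g⁆
  map_one' := commutatorElement_one_right a
  map_mul' g h := by
    have hc : ⁅a, h⁆ ∈ center Q := hQ (commutator_mem_commutator (mem_top a) (mem_top h))
    calc ⁅a, g * h⁆ = ⁅a, g⁆ * (g * ⁅a, h⁆ * g⁻¹) := by simp only [commutatorElement_def]; group
      _ = ⁅a, g⁆ * ⁅a, h⁆ := by rw [mem_center_iff.mp hc g, mul_inv_cancel_right]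

@[simp]
theorem commutatorHom_apply (hQ : commutator Q ≤ center Q) (a g : Q) :
    commutatorHom hQ a g = ⁅a, g⁆ :=
  rfl

theorem range_commutatorHom_le (hQ : commutator Q ≤ center Q) (a : Q) :
    (commutatorHom hQ a).range ≤ commutator Q := by
  rintro _ ⟨g, rfl⟩
  exact commutator_mem_commutator (mem_top a) (mem_top g)

theorem frattini_le_center (hQ : commutator Q ≤ center Q) {p : ℕ} (hp : p.Prime)
    (hcard : Nat.card (commutator Q) ∣ p) : frattini Q ≤ center Q := by
  intro z hz
  rw [mem_center_iff]
  intro a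
  have hker : frattini Q ≤ (commutatorHom hQ a).ker := by
    refine frattini_le_of_index_dvd_prime hp ?_
    rw [index_ker]
    exact (card_dvd_of_le (range_commutatorHom_le hQ a)).trans hcard
  exact commutatorElement_eq_one_iff_mul_comm.1 (hker hz)

theorem prod_commutatorHom_zpow_mul_zpow (hQ : commutator Q ≤ center Q) (x y : Q) (i j : ℤ) :
    (commutatorHom hQ x).prod (commutatorHom hQ y) (y ^ i * x ^ (-j)) =
      (⁅x, y⁆ ^ i, ⁅x, y⁆ ^ j) := by
  rw [MonoidHom.prod_apply, map_mul, map_mul, map_zpow, map_zpow, map_zpow, map_zpow]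
  simp only [commutatorHom_apply, commutatorElement_self, ← commutatorElement_inv x y, one_zpow,
    mul_one, one_mul, inv_zpow', neg_neg]

theorem ker_prod_commutatorHom_le_centralizer (hQ : commutator Q ≤ center Q) (x y : Q) :
    ((commutatorHom hQ x).prod (commutatorHom hQ y)).ker ≤ centralizer {x, y} := by
  intro g hg
  rw [MonoidHom.mem_ker, MonoidHom.prod_apply, Prod.mk_eq_one] at hg
  rw [mem_centralizer_iff]
  rintro _ (rfl | rfl)
  exacts [commutatorElement_eq_one_iff_mul_comm.1 hg.1,
    commutatorElement_eq_one_iff_mul_comm.1 hg.2]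

theorem center_le_ker_prod_commutatorHom (hQ : commutator Q ≤ center Q) (x y : Q) :
    center Q ≤ ((commutatorHom hQ x).prod (commutatorHom hQ y)).ker := fun z hz => by
  rw [MonoidHom.mem_ker, MonoidHom.prod_apply, Prod.mk_eq_one, commutatorHom_apply,
    commutatorHom_apply, commutatorElement_eq_one_iff_mul_comm,
    commutatorElement_eq_one_iff_mul_comm]
  exact ⟨mem_center_iff.1 hz x, mem_center_iff.1 hz y⟩

variable {x y : Q}

theorem exists_prod_commutatorHom_eq (hQ : commutator Q ≤ center Q)
    (hgen : zpowers ⁅x, y⁆ = commutator Q) (g : Q) : ∃ i j : ℤ,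
    (commutatorHom hQ x).prod (commutatorHom hQ y) g =
      (commutatorHom hQ x).prod (commutatorHom hQ y) (y ^ i * x ^ (-j)) := by
  obtain ⟨i, hi⟩ := mem_zpowers_iff.1 (hgen ▸ range_commutatorHom_le hQ x ⟨g, rfl⟩)
  obtain ⟨j, hj⟩ := mem_zpowers_iff.1 (hgen ▸ range_commutatorHom_le hQ y ⟨g, rfl⟩)
  exact ⟨i, j, by rw [prod_commutatorHom_zpow_mul_zpow, MonoidHom.prod_apply, hi, hj]⟩

theorem index_ker_prod_commutatorHom (hQ : commutator Q ≤ center Q)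
    (hgen : zpowers ⁅x, y⁆ = commutator Q) :
    ((commutatorHom hQ x).prod (commutatorHom hQ y)).ker.index = Nat.card (commutator Q) ^ 2 := by
  have hrange : ((commutatorHom hQ x).prod (commutatorHom hQ y)).range =
      (commutator Q).prod (commutator Q) := by
    refine le_antisymm ?_ ?_
    · rintro _ ⟨g, rfl⟩
      exact mem_prod.2 ⟨range_commutatorHom_le hQ x ⟨g, rfl⟩, range_commutatorHom_le hQ y ⟨g, rfl⟩⟩
    · rintro ⟨a, b⟩ hab
      rw [mem_prod, ← hgen, mem_zpowers_iff, mem_zpowers_iff] at hab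
      obtain ⟨⟨i, rfl⟩, ⟨j, rfl⟩⟩ := hab
      exact ⟨_, prod_commutatorHom_zpow_mul_zpow hQ x y i j⟩
  rw [index_ker, hrange, Nat.card_congr (prodEquiv _ _).toEquiv, Nat.card_prod, sq]

theorem ker_prod_commutatorHom_sup_closure (hQ : commutator Q ≤ center Q)
    (hgen : zpowers ⁅x, y⁆ = commutator Q) :
    ((commutatorHom hQ x).prod (commutatorHom hQ y)).ker ⊔ closure {x, y} = ⊤ := by
  refine eq_top_iff.2 fun g _ => ?_
  obtain ⟨i, j, hij⟩ := exists_prod_commutatorHom_eq hQ hgen g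
  have hs : y ^ i * x ^ (-j) ∈ closure {x, y} :=
    mul_mem (zpow_mem (subset_closure (by simp)) i) (zpow_mem (subset_closure (by simp)) _)
  have hk : g * (y ^ i * x ^ (-j))⁻¹ ∈ ((commutatorHom hQ x).prod (commutatorHom hQ y)).ker := by
    rw [MonoidHom.mem_ker, map_mul, map_inv, hij, mul_inv_cancel]
  simpa only [inv_mul_cancel_right] using mul_mem_sup hk hs

theorem exists_index_center_eq_pow_two_mul {p : ℕ} (hp : p.Prime) [Finite Q]
    (hQ : commutator Q ≤ center Q) (hcard : Nat.card (commutator Q) ∣ p) :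
    ∃ m : ℕ, (center Q).index = p ^ (2 * m) := by
  induction hn : Nat.card Q using Nat.strong_induction_on generalizing Q with
  | _ n ih =>
  subst hn
  rcases (Nat.dvd_prime hp).1 hcard with hbot | hcardp
  · rw [(commutator_eq_bot_iff_center_eq_top Q).1 (eq_bot_of_card_eq _ hbot), index_top]
    exact ⟨0, rfl⟩
  obtain ⟨x, y, hxy⟩ : ∃ x y : Q, ⁅x, y⁆ ≠ 1 := by
    by_contra! h
    refine hp.ne_one (hcardp ▸ card_eq_one.2 (eq_bot_iff.2 ?_))
    rw [_root_.commutator_def, commutator_le]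
    exact fun x _ y _ => (h x y).symm ▸ one_mem _
  have hgen := zpowers_eq_of_card_eq_prime hp hcardp
    (commutator_mem_commutator (mem_top x) (mem_top y)) hxy
  set H := ((commutatorHom hQ x).prod (commutatorHom hQ y)).ker
  have hindex : H.index = p ^ 2 := by rw [index_ker_prod_commutatorHom hQ hgen, hcardp]
  have hlt : Nat.card H < Nat.card Q := by
    rw [← H.card_mul_index, hindex]
    exact lt_mul_of_one_lt_right Nat.card_pos (Nat.one_lt_pow two_ne_zero hp.one_lt)
  obtain ⟨m, hm⟩ := ih _ hlt (commutator_le_center_of_subgroup H hQ)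
    ((card_commutator_subgroup_dvd H).trans hcard) rfl
  have hcenter : center H = (center Q).subgroupOf H := center_eq_subgroupOf_of_sup_closure_eq_top
    (ker_prod_commutatorHom_le_centralizer hQ x y) (ker_prod_commutatorHom_sup_closure hQ hgen)
  refine ⟨m + 1, ?_⟩
  rw [← relIndex_mul_index (center_le_ker_prod_commutatorHom hQ x y), relIndex, ← hcenter, hm,
    hindex, ← pow_add]
  ring_nf

end CentralCommutator

section Dsub

variable {G : Type*} [Group G]

theorem mem_Dsub_iff {T : Subgroup G} [T.Normal] {x : G} : x ∈ Dsub T ↔ ∀ g, ⁅x, g⁆ ∈ T := by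
  rw [Dsub, mem_comap, mem_center_iff, (QuotientGroup.mk'_surjective T).forall]
  refine forall_congr' fun g => ?_
  rw [← QuotientGroup.eq_one_iff, ← QuotientGroup.mk'_apply, map_commutatorElement,
    commutatorElement_eq_one_iff_mul_comm, eq_comm]

theorem closure_commutatorElement_le_iff {T : Subgroup G} [T.Normal] {x : G} :
    closure {y | ∃ g : G, y = ⁅x, g⁆} ≤ T ↔ x ∈ Dsub T := by
  rw [closure_le, mem_Dsub_iff]
  simp [Set.subset_def]

theorem closure_commutatorElement_normal (x : G) :
    (closure {y | ∃ g : G, y = ⁅x, g⁆}).Normal := by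
  refine ⟨fun n hn h => ?_⟩
  have hmap : (closure {y | ∃ g : G, y = ⁅x, g⁆}).map (MulAut.conj h).toMonoidHom ≤
      closure {y | ∃ g : G, y = ⁅x, g⁆} := by
    rw [MonoidHom.map_closure, closure_le]
    rintro _ ⟨_, ⟨g, rfl⟩, rfl⟩
    have hconj : (MulAut.conj h).toMonoidHom ⁅x, g⁆ = ⁅x, h⁆⁻¹ * ⁅x, h * g⁆ := by
      simp only [MulEquiv.coe_toMonoidHom, MulAut.conj_apply, commutatorElement_def]
      group
    rw [hconj]
    exact mul_mem (inv_mem (subset_closure ⟨h, rfl⟩)) (subset_closure ⟨h * g, rfl⟩)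
  exact hmap ⟨n, hn, rfl⟩

end Dsub

theorem commutator_word_subgroup_eq_derived_iff_not_mem_D_general
    {p : ℕ} (hp : p.Prime)
    {G : Type*} [Group G] [Finite G] (hG : IsPGroup p G) :
    (∀ x : G, Subgroup.closure {y | ∃ g : G, y = ⁅x, g⁆} = commutator G ↔
      x ∉ {y : G | ∃ (T : Subgroup G) (hT : T.Normal),
        IsMaxIn (commutator G) T ∧ y ∈ @Dsub G _ T hT}) ∧
    (∀ (T : Subgroup G) (hT : T.Normal), IsMaxIn (commutator G) T →
      frattini G ≤ @Dsub G _ T hT ∧ ∃ m : ℕ, (@Dsub G _ T hT).index = p ^ (2 * m)) := by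
  have : Fact p.Prime := ⟨hp⟩
  refine ⟨fun x => ⟨?_, fun hx => ?_⟩, fun T hT hmax => ?_⟩
  · rintro hx ⟨T, hT, hmax, hxT⟩
    exact hmax.1.not_ge (hx ▸ closure_commutatorElement_le_iff.2 hxT)
  · by_contra hne
    have hle : closure {y | ∃ g : G, y = ⁅x, g⁆} ≤ commutator G :=
      (closure_le _).2 fun _ ⟨g, hg⟩ => hg ▸ commutator_mem_commutator (mem_top x) (mem_top g)
    obtain ⟨T, hT, hmax, hxT⟩ :=
      hG.exists_isMaxIn_of_lt (closure_commutatorElement_normal x) (hle.lt_of_ne hne)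
    exact hx ⟨T, hT, hmax, closure_commutatorElement_le_iff.1 hxT⟩
  · have hsurj := QuotientGroup.mk'_surjective T
    have hatom : IsAtom (commutator (G ⧸ T)) :=
      map_commutator_eq_of_surjective hsurj ▸ (isMaxIn_iff_isAtom_map hmax.1.le).1 hmax
    have hcard := (hG.to_quotient T).card_eq_of_isAtom hatom
    have hcenter : commutator (G ⧸ T) ≤ center (G ⧸ T) :=
      (hG.to_quotient T).le_center_of_minimal_normal hatom.1 fun S _ hS => hatom.le_iff.1 hS
    refine ⟨(frattini_le_comap_frattini_of_surjective hsurj).trans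
      (comap_mono (frattini_le_center hcenter hp hcard.dvd)), ?_⟩
    rw [Dsub, index_comap_of_surjective _ hsurj]
    exact exists_index_center_eq_pow_two_mul hp hcenter hcard.dvd

theorem commutator_word_subgroup_eq_derived_iff_not_mem_D
    {p : ℕ} (hp : p.Prime)
    {G : Type*} [Group G] [Finite G] (hG : IsPGroup p G)
    (hnab : commutator G ≠ ⊥) :
    (∀ x : G, Subgroup.closure {y | ∃ g : G, y = ⁅x, g⁆} = commutator G ↔
      x ∉ {y : G | ∃ (T : Subgroup G) (hT : T.Normal),
        IsMaxIn (commutator G) T ∧ y ∈ @Dsub G _ T hT}) ∧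
    (∀ (T : Subgroup G) (hT : T.Normal), IsMaxIn (commutator G) T →
      frattini G ≤ @Dsub G _ T hT ∧ ∃ m : ℕ, (@Dsub G _ T hT).index = p ^ (2 * m)) :=
  commutator_word_subgroup_eq_derived_iff_not_mem_D_general hp hG
end

section
/- Let G be a finite p-group, let H be a normal subgroup of G, and let k ≥ 1. Then [H, G^{p^k}] ≤ [H,G]^p · [H, G, …, G], where the iterated commutator subgroup on the right has p^k copies of G. -/
/-!
STATEMENT 12: Let G be a finite p-group, let H be a normal subgroup of G, and
let k ≥ 1.  Then [H, G^{p^k}] ≤ [H,G]^p · [H, G, …, G], where the iterated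
commutator subgroup on the right has p^k copies of G.

Here `iterComm H j` is the iterated commutator subgroup [H, G, …(j times)…, G],
`sgPow H n = ⟨h^n : h ∈ H⟩` (so G^{p^k} = sgPow ⊤ (p^k) and
[H,G]^p = sgPow ⁅H,⊤⁆ p), and the product of the two normal subgroups on the
right-hand side is their join ⊔.
-/

/-- The subgroup `⟨h^n : h ∈ H⟩` generated by the `n`-th powers of elements of `H`. -/
def sgPow {G : Type*} [Group G] (H : Subgroup G) (n : ℕ) : Subgroup G :=
  Subgroup.closure ((· ^ n) '' (H : Set G))

/-- The iterated commutator subgroup `[H, G, …(j times)…, G]`. -/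
def iterComm {G : Type*} [Group G] (H : Subgroup G) : ℕ → Subgroup G
  | 0 => H
  | j + 1 => ⁅iterComm H j, (⊤ : Subgroup G)⁆

open scoped commutatorElement

/-!
Put `n = p^k` and pass to `Q = G ⧸ N`, `N = [H,G]^p · [H,G,…,G]`. The images `C j` of
`[H,G,…,G]` (`j` copies of `G`; `C 0 = Q`) satisfy `[C a, C b] ≤ C (a + b)`, `C 1` has exponent
`p` and `C n = 1`. For `h ∈ H`, `g ∈ G` and `c = [h, g] ∈ C 1`,
`h g^n h⁻¹ = (c g)^n = (∏_{i<n} g^i c g^{-i}) g^n`, so it suffices that this product vanishes.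

The sequence `i ↦ g^i c g^{-i}` is polynomial in Lazard's sense: its `j`-th multiplicative
difference lies in `C (j + 1)`. Such sequences are closed under products, inverses and
commutators. If a polynomial `u` vanishes below `t`, then `β = u t` lies so deep that
`r i = β^-(i choose t) u i` is again polynomial and vanishes up to `t`; moving the factors
`β^(i choose t)` of `∏ u i = ∏ β^(i choose t) r i` to the right conjugates the `r i` and leaves
`β^(n choose t+1)`, which is trivial as `p ∣ (n choose s)` for `0 < s < n`. Induction on `t`.
-/

namespace Subgroup

variable {G : Type*} [Group G]

theorem closure_normal_of_forall_conj_mem {s : Set G}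
    (hs : ∀ x ∈ s, ∀ g : G, g * x * g⁻¹ ∈ closure s) : (closure s).Normal := by
  have h : normalClosure s = closure s := by
    refine le_antisymm ((closure_le _).2 fun x hx => ?_) (closure_mono Group.subset_conjugatesOfSet)
    obtain ⟨a, ha, hax⟩ := Group.mem_conjugatesOfSet_iff.1 hx
    obtain ⟨g, rfl⟩ := isConj_iff.1 hax
    exact hs a ha g
  rw [← h]
  infer_instance

instance commutator_top_normal (H : Subgroup G) : ⁅H, (⊤ : Subgroup G)⁆.Normal := by
  rw [commutator_def]
  refine closure_normal_of_forall_conj_mem ?_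
  rintro _ ⟨h, hh, y, -, rfl⟩ g
  have : g * ⁅h, y⁆ * g⁻¹ = ⁅h, g⁆⁻¹ * ⁅h, g * y⁆ := by
    simp only [commutatorElement_def]
    group
  rw [this]
  exact mul_mem (inv_mem (subset_closure ⟨h, hh, g, mem_top g, rfl⟩))
    (subset_closure ⟨h, hh, g * y, mem_top _, rfl⟩)

theorem commutator_commutator_le_of_rotate {A B D N : Subgroup G} [N.Normal]
    (h1 : ⁅⁅B, D⁆, A⁆ ≤ N) (h2 : ⁅⁅D, A⁆, B⁆ ≤ N) : ⁅⁅A, B⁆, D⁆ ≤ N := by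
  simp only [← QuotientGroup.ker_mk' N, ← map_eq_bot_iff, map_commutator] at h1 h2 ⊢
  exact commutator_commutator_eq_bot_of_rotate h1 h2

theorem commutator_closure_le {H N : Subgroup G} [hN : N.Normal] {s : Set G}
    (h : ∀ x ∈ H, ∀ y ∈ s, ⁅x, y⁆ ∈ N) : ⁅H, closure s⁆ ≤ N := by
  rw [commutator_le]
  intro x hx y hy
  induction hy using closure_induction with
  | mem y hy => exact h x hx y hy
  | one => simp
  | mul a b _ _ ha hb =>
    rw [commutatorElement_mul_right_eq_mul_conj]
    simpa only [mul_assoc] using N.mul_mem ha (hN.conj_mem _ hb a)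
  | inv a _ ha =>
    rw [commutatorElement_inv_right, ← commutatorElement_inv]
    simpa only [inv_inv] using hN.conj_mem _ (N.inv_mem ha) a⁻¹

end Subgroup

section Powers

variable {G : Type*} [Group G]

theorem pow_mem_sgPow {H : Subgroup G} {x : G} (hx : x ∈ H) (m : ℕ) : x ^ m ∈ sgPow H m :=
  Subgroup.subset_closure ⟨x, hx, rfl⟩

instance sgPow_normal (H : Subgroup G) [hH : H.Normal] (m : ℕ) : (sgPow H m).Normal :=
  Subgroup.closure_normal_of_forall_conj_mem <| by
    rintro _ ⟨x, hx, rfl⟩ g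
    rw [← conj_pow]
    exact pow_mem_sgPow (hH.conj_mem x hx g) m

end Powers

section IterComm

variable {G : Type*} [Group G] (H : Subgroup G)

theorem iterComm_normal {j : ℕ} (hj : j ≠ 0) : (iterComm H j).Normal := by
  obtain ⟨j, rfl⟩ := Nat.exists_eq_succ_of_ne_zero hj
  exact Subgroup.commutator_top_normal _

theorem commutator_iterComm_le (i j : ℕ) :
    ⁅iterComm H (i + 1), iterComm H j⁆ ≤ iterComm H (i + 1 + j) := by
  induction j generalizing i with
  | zero =>
    have := iterComm_normal H i.succ_ne_zero
    exact Subgroup.commutator_le_left _ _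
  | succ j ih =>
    rw [show i + 1 + (j + 1) = i + 1 + j + 1 by omega]
    have := iterComm_normal H (i + 1 + j).succ_ne_zero
    show ⁅iterComm H (i + 1), ⁅iterComm H j, ⊤⁆⁆ ≤ _
    rw [Subgroup.commutator_comm]
    refine Subgroup.commutator_commutator_le_of_rotate ?_ ?_
    · rw [Subgroup.commutator_comm ⊤]
      exact (ih (i + 1)).trans_eq (congrArg (iterComm H) (by omega))
    · exact Subgroup.commutator_mono (ih i) le_rfl

def iterCommFiltration : ℕ → Subgroup G
  | 0 => ⊤
  | j + 1 => iterComm H (j + 1)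

theorem iterCommFiltration_of_ne_zero {j : ℕ} (hj : j ≠ 0) :
    iterCommFiltration H j = iterComm H j := by
  obtain ⟨j, rfl⟩ := Nat.exists_eq_succ_of_ne_zero hj
  rfl

end IterComm

structure IsGradedFiltration {Q : Type*} [Group Q] (C : ℕ → Subgroup Q) : Prop where
  antitone : Antitone C
  commutator_le : ∀ a b, ⁅C a, C b⁆ ≤ C (a + b)

theorem IsGradedFiltration.map {Q Q' : Type*} [Group Q] [Group Q'] {C : ℕ → Subgroup Q}
    (hC : IsGradedFiltration C) (f : Q →* Q') : IsGradedFiltration fun j => (C j).map f where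
  antitone _ _ hab := Subgroup.map_mono (hC.antitone hab)
  commutator_le a b := by
    rw [← Subgroup.map_commutator]
    exact Subgroup.map_mono (hC.commutator_le a b)

theorem isGradedFiltration_iterCommFiltration {G : Type*} [Group G] (H : Subgroup G) :
    IsGradedFiltration (iterCommFiltration H) where
  antitone := antitone_nat_of_succ_le fun
    | 0 => le_top
    | j + 1 => by
      have := iterComm_normal H j.succ_ne_zero
      exact Subgroup.commutator_le_left _ _
  commutator_le
    | 0, 0 => le_top
    | 0, b + 1 => by
      have := iterComm_normal H b.succ_ne_zero
      rw [zero_add]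
      exact Subgroup.commutator_le_right ⊤ (iterComm H (b + 1))
    | a + 1, 0 => by
      have := iterComm_normal H a.succ_ne_zero
      exact Subgroup.commutator_le_left (iterComm H (a + 1)) ⊤
    | a + 1, b + 1 => commutator_iterComm_le H a (b + 1)

section PolySeq

variable {Q : Type*} [Group Q]

def mulFwdDiff (u : ℕ → Q) : ℕ → Q := fun i => (u i)⁻¹ * u (i + 1)

theorem mulFwdDiff_one : mulFwdDiff (1 : ℕ → Q) = 1 := by
  funext i
  simp [mulFwdDiff]

theorem mulFwdDiff_mul (u w : ℕ → Q) :
    mulFwdDiff (u * w) = w⁻¹ * mulFwdDiff u * w⁻¹⁻¹ * mulFwdDiff w := by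
  funext i
  simp only [mulFwdDiff, Pi.mul_apply, Pi.inv_apply]
  group

theorem mulFwdDiff_inv (u : ℕ → Q) : mulFwdDiff u⁻¹ = u * (mulFwdDiff u)⁻¹ * u⁻¹ := by
  funext i
  simp only [mulFwdDiff, Pi.mul_apply, Pi.inv_apply]
  group

theorem mulFwdDiff_commutatorElement (u w : ℕ → Q) :
    mulFwdDiff ⁅u, w⁆ =
      ⁅u, w⁆⁻¹ * (u * ⁅mulFwdDiff u, w⁆ * u⁻¹) * ⁅u, w⁆⁻¹⁻¹ *
        (w * (u * ⁅mulFwdDiff u, mulFwdDiff w⁆ * u⁻¹) * w⁻¹) * (w * ⁅u, mulFwdDiff w⁆ * w⁻¹) := by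
  funext i
  simp only [mulFwdDiff, commutatorElement_def, Pi.mul_apply, Pi.inv_apply]
  group

variable (C : ℕ → Subgroup Q)

/-- `IsPolySeqUpTo C f a v u`: for `j < f`, the `j`-th difference of `u` takes values in
`C (max v (a + j))` (read `C v` for `j = 0`). -/
def IsPolySeqUpTo : ℕ → ℕ → ℕ → (ℕ → Q) → Prop
  | 0, _, _, _ => True
  | f + 1, a, v, u => (∀ i, u i ∈ C v) ∧ IsPolySeqUpTo f (a + 1) (max (a + 1) v) (mulFwdDiff u)

def IsPolySeq (a v : ℕ) (u : ℕ → Q) : Prop := ∀ f, IsPolySeqUpTo C f a v u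

/-- The closure properties at depth `f + 1` use those at depth `f` for other weights and
levels, so they are proved together by induction on `f`. -/
structure PolySeqClosed (f : ℕ) : Prop where
  mul : ∀ {a v u w}, a ≤ v → IsPolySeqUpTo C f a v u → IsPolySeqUpTo C f a v w →
    IsPolySeqUpTo C f a v (u * w)
  inv : ∀ {a v u}, a ≤ v → IsPolySeqUpTo C f a v u → IsPolySeqUpTo C f a v u⁻¹
  commutatorElement : ∀ {a v b z u w}, a ≤ v → b ≤ z → IsPolySeqUpTo C f a v u →
    IsPolySeqUpTo C f b z w → IsPolySeqUpTo C f (a + b) (v + z) ⁅u, w⁆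

variable {C}

theorem IsPolySeqUpTo.of_succ {f a v : ℕ} {u : ℕ → Q} (hu : IsPolySeqUpTo C (f + 1) a v u) :
    IsPolySeqUpTo C f a v u := by
  induction f generalizing a v u with
  | zero => trivial
  | succ f ih => exact ⟨hu.1, ih hu.2⟩

theorem IsPolySeqUpTo.mono (hC : Antitone C) {f a v a' v' : ℕ} {u : ℕ → Q}
    (hu : IsPolySeqUpTo C f a v u) (ha : a' ≤ a) (hv : v' ≤ v) : IsPolySeqUpTo C f a' v' u := by
  induction f generalizing a v a' v' u with
  | zero => trivial
  | succ f ih => exact ⟨fun i => hC hv (hu.1 i), ih hu.2 (by omega) (by omega)⟩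

theorem isPolySeqUpTo_one (f a v : ℕ) : IsPolySeqUpTo C f a v 1 := by
  induction f generalizing a v with
  | zero => trivial
  | succ f ih => exact ⟨fun _ => one_mem _, by rw [mulFwdDiff_one]; exact ih _ _⟩

theorem PolySeqClosed.conj (hC : Antitone C) {f a v b z : ℕ} {u w : ℕ → Q} (h : PolySeqClosed C f)
    (ha : a ≤ v) (hb : b ≤ z) (hu : IsPolySeqUpTo C f a v u) (hw : IsPolySeqUpTo C f b z w) :
    IsPolySeqUpTo C f a v (w * u * w⁻¹) := by
  rw [show w * u * w⁻¹ = ⁅w, u⁆ * u by rw [commutatorElement_def, inv_mul_cancel_right]]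
  exact h.mul ha ((h.commutatorElement hb ha hw hu).mono hC (by omega) (by omega)) hu

theorem PolySeqClosed.mul_succ (hC : Antitone C) {f : ℕ} (h : PolySeqClosed C f) {a v : ℕ}
    {u w : ℕ → Q} (ha : a ≤ v) (hu : IsPolySeqUpTo C (f + 1) a v u)
    (hw : IsPolySeqUpTo C (f + 1) a v w) : IsPolySeqUpTo C (f + 1) a v (u * w) := by
  refine ⟨fun i => mul_mem (hu.1 i) (hw.1 i), ?_⟩
  rw [mulFwdDiff_mul]
  exact h.mul (le_max_left _ _) (h.conj hC (le_max_left _ _) ha hu.2 (h.inv ha hw.of_succ)) hw.2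

theorem PolySeqClosed.inv_succ (hC : Antitone C) {f : ℕ} (h : PolySeqClosed C f) {a v : ℕ}
    {u : ℕ → Q} (ha : a ≤ v) (hu : IsPolySeqUpTo C (f + 1) a v u) :
    IsPolySeqUpTo C (f + 1) a v u⁻¹ := by
  refine ⟨fun i => inv_mem (hu.1 i), ?_⟩
  rw [mulFwdDiff_inv]
  exact h.conj hC (le_max_left _ _) ha (h.inv (le_max_left _ _) hu.2) hu.of_succ

theorem PolySeqClosed.commutatorElement_succ (hC : IsGradedFiltration C) {f : ℕ}
    (h : PolySeqClosed C f) {a v b z : ℕ} {u w : ℕ → Q} (ha : a ≤ v) (hb : b ≤ z)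
    (hu : IsPolySeqUpTo C (f + 1) a v u) (hw : IsPolySeqUpTo C (f + 1) b z w) :
    IsPolySeqUpTo C (f + 1) (a + b) (v + z) ⁅u, w⁆ := by
  refine ⟨fun i => hC.commutator_le v z (Subgroup.commutator_mem_commutator (hu.1 i) (hw.1 i)), ?_⟩
  have hA : a + b + 1 ≤ max (a + b + 1) (v + z) := le_max_left _ _
  have hmono {a' v' : ℕ} {x : ℕ → Q} (hx : IsPolySeqUpTo C f a' v' x) (ha' : a + b + 1 ≤ a')
      (hv' : max (a + b + 1) (v + z) ≤ v') :
      IsPolySeqUpTo C f (a + b + 1) (max (a + b + 1) (v + z)) x :=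
    hx.mono hC.antitone ha' hv'
  have huw := h.commutatorElement ha hb hu.of_succ hw.of_succ
  have hduw := hmono (h.commutatorElement (le_max_left _ _) hb hu.2 hw.of_succ)
    (by omega) (by omega)
  have hdudw := hmono (h.commutatorElement (le_max_left _ _) (le_max_left _ _) hu.2 hw.2)
    (by omega) (by omega)
  have hudw := hmono (h.commutatorElement ha (le_max_left _ _) hu.of_succ hw.2)
    (by omega) (by omega)
  rw [mulFwdDiff_commutatorElement]
  refine h.mul hA (h.mul hA ?_ ?_) ?_
  · exact h.conj hC.antitone hA (by omega) (h.conj hC.antitone hA ha hduw hu.of_succ)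
      (h.inv (by omega) huw)
  · exact h.conj hC.antitone hA hb (h.conj hC.antitone hA ha hdudw hu.of_succ) hw.of_succ
  · exact h.conj hC.antitone hA hb hudw hw.of_succ

theorem polySeqClosed (hC : IsGradedFiltration C) (f : ℕ) : PolySeqClosed C f := by
  induction f with
  | zero => exact ⟨fun _ _ _ => trivial, fun _ _ => trivial, fun _ _ _ _ => trivial⟩
  | succ f h =>
    exact ⟨h.mul_succ hC.antitone, h.inv_succ hC.antitone, h.commutatorElement_succ hC⟩

theorem isPolySeqUpTo_shift {f a v : ℕ} {u : ℕ → Q} (hu : IsPolySeqUpTo C f a v u) :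
    IsPolySeqUpTo C f a v (fun i => u (i + 1)) := by
  induction f generalizing a v u with
  | zero => trivial
  | succ f ih => exact ⟨fun i => hu.1 (i + 1), ih hu.2⟩

theorem isPolySeqUpTo_pow_choose (hC : Antitone C) (β : Q) (f : ℕ) {a v t : ℕ}
    (hβ : β ∈ C (max v (a + t))) : IsPolySeqUpTo C f a v (fun i => β ^ i.choose t) := by
  induction f generalizing a v t with
  | zero => trivial
  | succ f ih =>
    refine ⟨fun i => pow_mem (hC (le_max_left _ _) hβ) _, ?_⟩
    cases t with
    | zero =>
      have : mulFwdDiff (fun i => β ^ i.choose 0) = 1 := by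
        funext i
        simp [mulFwdDiff]
      rw [this]
      exact isPolySeqUpTo_one _ _ _
    | succ s =>
      have : mulFwdDiff (fun i => β ^ i.choose (s + 1)) = fun i => β ^ i.choose s := by
        funext i
        simp only [mulFwdDiff]
        rw [Nat.choose_succ_succ', pow_add]
        group
      rw [this]
      exact ih (by rwa [show max (max (a + 1) v) (a + 1 + s) = max v (a + (s + 1)) by omega])

theorem isPolySeqUpTo_conj_pow (hC : Antitone C) (hcentral : ∀ a, ⁅C (a + 1), ⊤⁆ ≤ C (a + 2))
    (g : Q) (f : ℕ) {a : ℕ} {x : Q} (hx : x ∈ C (a + 1)) :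
    IsPolySeqUpTo C f (a + 1) (a + 1) (fun i => g ^ i * x * (g ^ i)⁻¹) := by
  induction f generalizing a x with
  | zero => trivial
  | succ f ih =>
    have hnormal : (C (a + 1)).Normal :=
      Subgroup.commutator_top_right_le_iff.1 ((hcentral a).trans (hC (Nat.le_succ _)))
    refine ⟨fun i => hnormal.conj_mem x hx (g ^ i), ?_⟩
    have : mulFwdDiff (fun i => g ^ i * x * (g ^ i)⁻¹) = fun i => g ^ i * ⁅x⁻¹, g⁆ * (g ^ i)⁻¹ := by
      funext i
      simp only [mulFwdDiff, commutatorElement_def, pow_succ]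
      group
    rw [this, show max (a + 1 + 1) (a + 1) = a + 1 + 1 by omega]
    exact ih (hcentral a (Subgroup.commutator_mem_commutator (inv_mem hx) (Subgroup.mem_top g)))

namespace IsPolySeq

variable {a v b z : ℕ} {u w : ℕ → Q}

theorem mem (hu : IsPolySeq C a v u) (i : ℕ) : u i ∈ C v := (hu 1).1 i

theorem mul (hC : IsGradedFiltration C) (ha : a ≤ v) (hu : IsPolySeq C a v u)
    (hw : IsPolySeq C a v w) : IsPolySeq C a v (u * w) :=
  fun f => (polySeqClosed hC f).mul ha (hu f) (hw f)

theorem inv (hC : IsGradedFiltration C) (ha : a ≤ v) (hu : IsPolySeq C a v u) :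
    IsPolySeq C a v u⁻¹ :=
  fun f => (polySeqClosed hC f).inv ha (hu f)

theorem conj (hC : IsGradedFiltration C) (ha : a ≤ v) (hb : b ≤ z) (hu : IsPolySeq C a v u)
    (hw : IsPolySeq C b z w) : IsPolySeq C a v (w * u * w⁻¹) :=
  fun f => (polySeqClosed hC f).conj hC.antitone ha hb (hu f) (hw f)

theorem shift (hu : IsPolySeq C a v u) : IsPolySeq C a v (fun i => u (i + 1)) :=
  fun f => isPolySeqUpTo_shift (hu f)

theorem leading_mem (hu : IsPolySeq C a v u) (ha : a ≤ v) {t : ℕ} (ht : ∀ i < t, u i = 1) :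
    u t ∈ C (max v (a + t)) := by
  induction t generalizing a v u with
  | zero => simpa [show max v a = v by omega] using hu.mem 0
  | succ t ih =>
    have hdiff : IsPolySeq C (a + 1) (max (a + 1) v) (mulFwdDiff u) := fun f => (hu (f + 1)).2
    have hlead := ih hdiff (le_max_left _ _) fun i hi => by
      simp [mulFwdDiff, ht i (by omega), ht (i + 1) (by omega)]
    have : u (t + 1) = mulFwdDiff u t := by simp [mulFwdDiff, ht t (by omega)]
    rw [this, show max v (a + (t + 1)) = max (max (a + 1) v) (a + 1 + t) by omega]
    exact hlead

end IsPolySeq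

end PolySeq

section Collection

variable {Q : Type*} [Group Q]

theorem mul_pow_eq_list_prod_conj_mul (c g : Q) (m : ℕ) :
    (c * g) ^ m = ((List.range m).map fun i => g ^ i * c * (g ^ i)⁻¹).prod * g ^ m := by
  induction m with
  | zero => simp
  | succ m ih =>
    rw [pow_succ, ih, List.prod_range_succ, pow_succ]
    group

theorem list_prod_pow_choose_mul (β : Q) (t : ℕ) (r : ℕ → Q) (m : ℕ) :
    ((List.range m).map fun i => β ^ i.choose t * r i).prod =
      ((List.range m).map fun i =>
        β ^ (i + 1).choose (t + 1) * r i * (β ^ (i + 1).choose (t + 1))⁻¹).prod *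
        β ^ m.choose (t + 1) := by
  induction m with
  | zero => simp
  | succ m ih =>
    rw [List.prod_range_succ, List.prod_range_succ, ih, Nat.choose_succ_succ' m t, pow_add]
    group

variable {C : ℕ → Subgroup Q} {p k : ℕ}

theorem pow_choose_eq_one (hp : p.Prime) (hC : Antitone C) (hbot : C (p ^ k) = ⊥)
    (hexp : ∀ x ∈ C 1, x ^ p = 1) {β : Q} {t : ℕ} (hβ : β ∈ C (t + 1)) :
    β ^ (p ^ k).choose (t + 1) = 1 := by
  rcases lt_trichotomy (t + 1) (p ^ k) with hlt | heq | hgt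
  · obtain ⟨c, hc⟩ := hp.dvd_choose_pow t.succ_ne_zero hlt.ne
    rw [hc, pow_mul, hexp β (hC (Nat.le_add_left _ _) hβ), one_pow]
  · rw [heq, hbot] at hβ
    rw [Subgroup.mem_bot.1 hβ, one_pow]
  · rw [Nat.choose_eq_zero_of_lt hgt, pow_zero]

theorem IsPolySeq.list_prod_range_eq_one (hp : p.Prime) (hC : IsGradedFiltration C)
    (hbot : C (p ^ k) = ⊥) (hexp : ∀ x ∈ C 1, x ^ p = 1) {a v : ℕ} (ha : 1 ≤ a) (hav : a ≤ v)
    {u : ℕ → Q} (hu : IsPolySeq C a v u) {t : ℕ} (ht : ∀ i < t, u i = 1) :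
    ((List.range (p ^ k)).map u).prod = 1 := by
  induction hd : p ^ k - t generalizing t u with
  | zero => exact List.prod_eq_one (by simpa using fun i hi => ht i (by omega))
  | succ d ih =>
    set β := u t
    have hβ : β ∈ C (max v (a + t)) := hu.leading_mem hav ht
    have hx : IsPolySeq C a v fun i => β ^ i.choose t :=
      fun f => isPolySeqUpTo_pow_choose hC.antitone β f hβ
    have hY : IsPolySeq C 0 0 fun i => β ^ (i + 1).choose (t + 1) :=
      IsPolySeq.shift fun f => isPolySeqUpTo_pow_choose hC.antitone β f
        (hC.antitone (by omega) hβ)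
    set u' := fun i => β ^ (i + 1).choose (t + 1) * ((β ^ i.choose t)⁻¹ * u i) *
      (β ^ (i + 1).choose (t + 1))⁻¹
    have hu' : IsPolySeq C a v u' := ((hx.inv hC hav).mul hC hav hu).conj hC hav le_rfl hY
    have ht' : ∀ i < t + 1, u' i = 1 := by
      intro i hi
      rcases Nat.lt_or_eq_of_le (Nat.lt_succ_iff.1 hi) with hit | rfl
      · simp [u', ht i hit, Nat.choose_eq_zero_of_lt hit]
      · simp [u', β]
    calc ((List.range (p ^ k)).map u).prod
        = ((List.range (p ^ k)).map fun i => β ^ i.choose t * ((β ^ i.choose t)⁻¹ * u i)).prod := by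
          simp only [mul_inv_cancel_left]
      _ = ((List.range (p ^ k)).map u').prod * β ^ (p ^ k).choose (t + 1) :=
          list_prod_pow_choose_mul β t _ _
      _ = 1 := by
          rw [ih hu' ht' (by omega), pow_choose_eq_one hp hC.antitone hbot hexp
            (hC.antitone (by omega) hβ), mul_one]

theorem commutatorElement_pow_prime_pow_eq_one (hp : p.Prime) (hC : IsGradedFiltration C)
    (hcentral : ∀ a, ⁅C (a + 1), ⊤⁆ ≤ C (a + 2)) (hbot : C (p ^ k) = ⊥)
    (hexp : ∀ x ∈ C 1, x ^ p = 1) {h g : Q} (hc : ⁅h, g⁆ ∈ C 1) : ⁅h, g ^ p ^ k⁆ = 1 := by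
  have horbit : IsPolySeq C 1 1 fun i => g ^ i * ⁅h, g⁆ * (g ^ i)⁻¹ :=
    fun f => isPolySeqUpTo_conj_pow hC.antitone hcentral g f hc
  have key := mul_pow_eq_list_prod_conj_mul ⁅h, g⁆ g (p ^ k)
  rw [horbit.list_prod_range_eq_one hp hC hbot hexp le_rfl le_rfl (t := 0) (by simp), one_mul,
    show ⁅h, g⁆ * g = h * g * h⁻¹ by group, conj_pow] at key
  rw [commutatorElement_def, key, mul_inv_cancel]

end Collection

theorem commutatorElement_pow_prime_pow_mem {p : ℕ} (hp : p.Prime) {G : Type*} [Group G]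
    (H : Subgroup G) (k : ℕ) {h : G} (hh : h ∈ H) (g : G) :
    ⁅h, g ^ p ^ k⁆ ∈ sgPow ⁅H, (⊤ : Subgroup G)⁆ p ⊔ iterComm H (p ^ k) := by
  have hpk : p ^ k ≠ 0 := pow_ne_zero k hp.ne_zero
  set N := sgPow ⁅H, (⊤ : Subgroup G)⁆ p ⊔ iterComm H (p ^ k)
  have := iterComm_normal H hpk
  let π := QuotientGroup.mk' N
  let C j := (iterCommFiltration H j).map π
  have hbot : C (p ^ k) = ⊥ := by
    rw [Subgroup.map_eq_bot_iff, QuotientGroup.ker_mk', iterCommFiltration_of_ne_zero H hpk]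
    exact le_sup_right
  have hexp : ∀ x ∈ C 1, x ^ p = 1 := by
    rintro _ ⟨y, hy, rfl⟩
    rw [← map_pow, QuotientGroup.mk'_apply, QuotientGroup.eq_one_iff]
    exact Subgroup.mem_sup_left (pow_mem_sgPow hy p)
  have hcentral : ∀ a, ⁅C (a + 1), ⊤⁆ ≤ C (a + 2) := fun a => by
    rw [← Subgroup.map_top_of_surjective π (QuotientGroup.mk'_surjective N),
      ← Subgroup.map_commutator]
    rfl
  have hc : ⁅π h, π g⁆ ∈ C 1 := by
    rw [← map_commutatorElement]
    exact Subgroup.mem_map_of_mem π (Subgroup.commutator_mem_commutator hh (Subgroup.mem_top g))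
  rw [← QuotientGroup.eq_one_iff, ← QuotientGroup.mk'_apply, map_commutatorElement, map_pow]
  exact commutatorElement_pow_prime_pow_eq_one hp
    ((isGradedFiltration_iterCommFiltration H).map π) hcentral hbot hexp hc

theorem commutator_with_powers_le_general
    {p : ℕ} (hp : p.Prime)
    {G : Type*} [Group G]
    (H : Subgroup G) (k : ℕ) :
    ⁅H, sgPow (⊤ : Subgroup G) (p ^ k)⁆ ≤
      sgPow ⁅H, (⊤ : Subgroup G)⁆ p ⊔ iterComm H (p ^ k) := by
  have := iterComm_normal H (pow_ne_zero k hp.ne_zero)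
  refine Subgroup.commutator_closure_le ?_
  rintro h hh _ ⟨g, -, rfl⟩
  exact commutatorElement_pow_prime_pow_mem hp H k hh g

theorem commutator_with_powers_le
    {p : ℕ} (hp : p.Prime)
    {G : Type*} [Group G] [Finite G] (hG : IsPGroup p G)
    (H : Subgroup G) (hH : H.Normal) (k : ℕ) (hk : 1 ≤ k) :
    ⁅H, sgPow (⊤ : Subgroup G) (p ^ k)⁆ ≤
      sgPow ⁅H, (⊤ : Subgroup G)⁆ p ⊔ iterComm H (p ^ k) :=
  commutator_with_powers_le_general hp H k
end

section
/- Let G be a finite p-group with γ_3(G) = 1 and (G')^p = 1, such that |G'| = p^3, and let x ∈ G be such that |[x,G]| = p^2. Then there exist u, v ∈ G such that G' = ⟨[u,v], [x,u], [x,v]⟩. -/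
/-!
Since `γ₃(G) = 1`, commutators are central, so `g ↦ ⁅x, g⁆` is a homomorphism with image
`[x,G]`, and `⁅g, h⁆` is multiplicative in each variable. Choose `u₀, v₀` with `⁅x, u₀⁆, ⁅x, v₀⁆`
generating `[x,G]` (possible because `[x,G]` has order `p²` and exponent `p`). For any such pair
`(u, v)` with `⁅u, v⁆ ∉ [x,G]`, the three commutators generate a subgroup strictly between
`[x,G]` and `G'`, which has index `p` in `G'`, so they generate `G'`. If no pair worked, `⁅u, v⁆`
would lie in `[x,G]` for every generating pair; since multiplying `v` by an element of the
centralizer `C_G(x)` keeps the pair generating, and `G = ⟨u₀, v₀⟩ C_G(x)`, bilinearity would put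
every commutator in `[x,G]`, contradicting `|G'| = p³ > p² = |[x,G]|`.
-/

open scoped commutatorElement

/-- `[x,G] = ⟨[x,g] : g ∈ G⟩`. -/
def xGsub {G : Type*} [Group G] (x : G) : Subgroup G :=
  Subgroup.closure {y | ∃ g : G, y = ⁅x, g⁆}

open Subgroup

section Group

variable {G : Type*} [Group G]

theorem pow_eq_one_of_sgPow_eq_bot {H : Subgroup G} {n : ℕ} (h : sgPow H n = ⊥) {g : G}
    (hg : g ∈ H) : g ^ n = 1 := by
  have : g ^ n ∈ sgPow H n := subset_closure ⟨g, hg, rfl⟩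
  rwa [h, mem_bot] at this

theorem commutator_le_center_of_lowerCentralSeries_two_eq_bot
    (h : (⊤ : Subgroup G).lowerCentralSeries 2 = ⊥) : commutator G ≤ center G := by
  rw [← centralizer_univ, ← coe_top, ← commutator_eq_bot_iff_le_centralizer]
  exact h

theorem commutatorElement_mem_comm {N : Subgroup G} {g h : G} : ⁅g, h⁆ ∈ N ↔ ⁅h, g⁆ ∈ N := by
  rw [← commutatorElement_inv, inv_mem_iff]

theorem eq_of_lt_of_le_of_card_eq_prime_pow {p n : ℕ} (hp : p.Prime) {H L K : Subgroup G}
    (hHL : H < L) (hLK : L ≤ K) (hH : Nat.card H = p ^ n) (hK : Nat.card K = p ^ (n + 1)) :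
    L = K := by
  obtain ⟨k, hkn, hL⟩ := (Nat.dvd_prime_pow hp).mp (hK ▸ card_dvd_of_le hLK)
  have : Finite L := Nat.finite_of_card_ne_zero (by simp [hL, hp.ne_zero])
  have : Finite K := Nat.finite_of_card_ne_zero (by simp [hK, hp.ne_zero])
  have hnk : n ≤ k :=
    (Nat.pow_dvd_pow_iff_le_right hp.one_lt).mp (hH ▸ hL ▸ card_dvd_of_le hHL.le)
  obtain rfl | rfl : k = n ∨ k = n + 1 := by omega
  · exact absurd (eq_of_le_of_card_ge hHL.le (by rw [hL, hH])) hHL.ne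
  · exact eq_of_le_of_card_ge hLK (by rw [hL, hK])

theorem exists_closure_pair_eq_of_card_eq_sq {p : ℕ} (hp : p.Prime) {W : Subgroup G}
    (hW : Nat.card W = p ^ 2) (hexp : ∀ w ∈ W, w ^ p = 1) :
    ∃ a ∈ W, ∃ b ∈ W, closure {a, b} = W := by
  have := Fact.mk hp
  obtain ⟨a, ha, ha1⟩ : ∃ a ∈ W, a ≠ 1 := W.bot_or_exists_ne_one.resolve_left fun h => by
    rw [h, card_bot] at hW
    exact absurd hW.symm (Nat.pow_eq_one.not.mpr (by simp [hp.ne_one]))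
  have hZ : Nat.card (zpowers a) = p ^ 1 := by
    rw [Nat.card_zpowers, pow_one, orderOf_eq_prime (hexp a ha) ha1]
  obtain ⟨b, hb, hbZ⟩ : ∃ b ∈ W, b ∉ zpowers a := by
    by_contra! h
    have := card_dvd_of_le (show W ≤ zpowers a from h)
    rw [hW, hZ] at this
    exact absurd ((Nat.pow_dvd_pow_iff_le_right hp.one_lt).mp this) (by norm_num)
  refine ⟨a, ha, b, hb, eq_of_lt_of_le_of_card_eq_prime_pow hp ?_ ?_ hZ hW⟩
  · exact SetLike.lt_iff_le_and_exists.mpr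
      ⟨zpowers_le.mpr (subset_closure (by simp)), b, subset_closure (by simp), hbZ⟩
  · exact (closure_le _).mpr (Set.pair_subset ha hb)

end Group

section CentralCommutators

variable {G : Type*} [Group G]

theorem commutatorElement_mul_right_of_le_center (hc : commutator G ≤ center G) (g h k : G) :
    ⁅g, h * k⁆ = ⁅g, h⁆ * ⁅g, k⁆ := by
  have hk : h * ⁅g, k⁆ = ⁅g, k⁆ * h :=
    mem_center_iff.mp (hc (commutator_mem_commutator (mem_top g) (mem_top k))) h
  calc ⁅g, h * k⁆ = ⁅g, h⁆ * (h * ⁅g, k⁆ * h⁻¹) := by simp only [commutatorElement_def]; group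
    _ = ⁅g, h⁆ * ⁅g, k⁆ := by rw [hk, mul_inv_cancel_right]

def commutatorElementHom (hc : commutator G ≤ center G) (g : G) : G →* G where
  toFun h := ⁅g, h⁆
  map_one' := commutatorElement_one_right g
  map_mul' := commutatorElement_mul_right_of_le_center hc g

theorem range_commutatorElementHom (hc : commutator G ≤ center G) (x : G) :
    (commutatorElementHom hc x).range = xGsub x := by
  rw [xGsub, ← (commutatorElementHom hc x).range.closure_eq, MonoidHom.coe_range]
  congr 1
  ext y
  exact ⟨fun ⟨g, hg⟩ => ⟨g, hg.symm⟩, fun ⟨g, hg⟩ => ⟨g, hg.symm⟩⟩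

variable {M : Type*} [Group M] (f : G →* M)

theorem eq_top_of_closure_pair_eq_range {u v : G} (huv : closure {f u, f v} = f.range)
    {H : Subgroup G} (hu : u ∈ H) (hv : v ∈ H) (hker : f.ker ≤ H) : H = ⊤ := by
  have hmap : H.map f = f.range := le_antisymm (map_le_range f H) <|
    huv ▸ (closure_le _).mpr (Set.pair_subset (mem_map_of_mem f hu) (mem_map_of_mem f hv))
  rw [← sup_eq_left.mpr hker]
  exact codisjoint_iff.mp (map_eq_range_iff.mp hmap)

theorem closure_pair_mul_eq_range_of_mem_ker {u v c : G} (huv : closure {f u, f v} = f.range)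
    (hc : c ∈ f.ker) : closure {f u, f (v * c)} = f.range := by
  rwa [map_mul, MonoidHom.mem_ker.mp hc, mul_one]

/-- `u`, `v` and `ker f` generate `G`, and `⁅u, c⁆ ∈ N` for `c ∈ ker f` because `(u, v * c)` is
again a generating pair. -/
theorem commutatorElement_mem_of_closure_pair_eq_range (hc : commutator G ≤ center G)
    {N : Subgroup G} (hN : ∀ u v, closure {f u, f v} = f.range → ⁅u, v⁆ ∈ N) {u v : G}
    (huv : closure {f u, f v} = f.range) (h : G) : ⁅u, h⁆ ∈ N := by
  suffices N.comap (commutatorElementHom hc u) = ⊤ from (eq_top_iff' _).mp this h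
  refine eq_top_of_closure_pair_eq_range f huv ?_ (hN u v huv) fun c hc' => ?_
  · show ⁅u, u⁆ ∈ N
    simp
  · exact ((N.comap _).mul_mem_cancel_left (hN u v huv)).mp
      (hN u (v * c) (closure_pair_mul_eq_range_of_mem_ker f huv hc'))

theorem commutatorElement_mem_of_forall_closure_pair_eq_range (hc : commutator G ≤ center G)
    {N : Subgroup G} (hN : ∀ u v, closure {f u, f v} = f.range → ⁅u, v⁆ ∈ N) {u₀ v₀ : G}
    (h₀ : closure {f u₀, f v₀} = f.range) (g h : G) : ⁅g, h⁆ ∈ N := by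
  have hpartner {u v : G} (huv : closure {f u, f v} = f.range) : ⁅h, u⁆ ∈ N :=
    commutatorElement_mem_comm.mp (commutatorElement_mem_of_closure_pair_eq_range f hc hN huv h)
  have h₀' : closure {f v₀, f u₀} = f.range := by rwa [Set.pair_comm]
  rw [commutatorElement_mem_comm]
  suffices N.comap (commutatorElementHom hc h) = ⊤ from (eq_top_iff' _).mp this g
  refine eq_top_of_closure_pair_eq_range f h₀ (hpartner h₀) (hpartner h₀') fun c hc' => ?_
  have hu₀c : closure {f (u₀ * c), f v₀} = f.range := by
    rw [Set.pair_comm]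
    exact closure_pair_mul_eq_range_of_mem_ker f h₀' hc'
  exact ((N.comap _).mul_mem_cancel_left (hpartner h₀)).mp (hpartner hu₀c)

end CentralCommutators

theorem exists_three_commutator_generators_general
    {p : ℕ} (hp : p.Prime)
    {G : Type*} [Group G]
    (h3 : (⊤ : Subgroup G).lowerCentralSeries 2 = ⊥)
    (hexp : sgPow (commutator G) p = ⊥)
    (hcard : Nat.card ↥(commutator G) = p ^ 3)
    (x : G) (hx : Nat.card ↥(xGsub x) = p ^ 2) :
    ∃ u v : G, commutator G = Subgroup.closure {⁅u, v⁆, ⁅x, u⁆, ⁅x, v⁆} := by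
  have hc := commutator_le_center_of_lowerCentralSeries_two_eq_bot h3
  set φ := commutatorElementHom hc x
  have hφ : φ.range = xGsub x := range_commutatorElementHom hc x
  have hG' {u v : G} : ⁅u, v⁆ ∈ commutator G := commutator_mem_commutator (mem_top u) (mem_top v)
  have hWG' : xGsub x ≤ commutator G := hφ ▸ fun _ ⟨_, hg⟩ => hg ▸ hG'
  obtain ⟨_, ⟨u₀, rfl⟩, _, ⟨v₀, rfl⟩, h₀⟩ := exists_closure_pair_eq_of_card_eq_sq hp (hφ ▸ hx)
    fun w hw => pow_eq_one_of_sgPow_eq_bot hexp (hWG' (hφ ▸ hw))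
  by_contra! hne
  have hN : ∀ u v, closure {φ u, φ v} = φ.range → ⁅u, v⁆ ∈ xGsub x := by
    intro u v huv
    by_contra huv'
    refine hne u v (eq_of_lt_of_le_of_card_eq_prime_pow hp (n := 2) ?_ ?_ hx hcard).symm
    · exact SetLike.lt_iff_le_and_exists.mpr ⟨hφ ▸ huv ▸ closure_mono (Set.subset_insert _ _),
        _, subset_closure (Set.mem_insert _ _), huv'⟩
    · exact (closure_le _).mpr (by rintro _ (rfl | rfl | rfl) <;> exact hG')
  have hle : commutator G ≤ xGsub x := commutator_le.mpr fun g _ h _ =>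
    commutatorElement_mem_of_forall_closure_pair_eq_range φ hc hN h₀ g h
  have := card_dvd_of_le hle
  rw [hcard, hx] at this
  exact absurd ((Nat.pow_dvd_pow_iff_le_right hp.one_lt).mp this) (by norm_num)

theorem exists_three_commutator_generators
    {p : ℕ} (hp : p.Prime)
    {G : Type*} [Group G] [Finite G] (hG : IsPGroup p G)
    (h3 : (⊤ : Subgroup G).lowerCentralSeries 2 = ⊥)
    (hexp : sgPow (commutator G) p = ⊥)
    (hcard : Nat.card ↥(commutator G) = p ^ 3)
    (x : G) (hx : Nat.card ↥(xGsub x) = p ^ 2) :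
    ∃ u v : G, commutator G = Subgroup.closure {⁅u, v⁆, ⁅x, u⁆, ⁅x, v⁆} :=
  exists_three_commutator_generators_general hp h3 hexp hcard x hx
end
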